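/- arXiv:0712.2204 — 5 statements merged into one kernel-verified Lean document; each statement's English description precedes it below -/
import Mathlib

section
/- Let V be a finite-dimensional complex vector space and let a, a† , h be endomorphisms of V satisfying the sl2-relations [a, a†] = h, [h, a] = 2a, [h, a†] = -2a†, with a and a† nilpotent. Then exp(-a) ∘ exp(a†) ∘ a = -a† ∘ exp(-a) ∘ exp(a†) as endomorphisms of V. -/
/-- The exponential of a (nilpotent) endomorphism of a finite-dimensional complex
vector space, given by the finite exponential series (a nilpotent endomorphism of an
`n`-dimensional space satisfies `a ^ n = 0`, so truncating at `finrank + ` suffices). -/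
noncomputable def expNil {V : Type*} [AddCommGroup V] [Module ℂ V] [FiniteDimensional ℂ V]
    (a : Module.End ℂ V) : Module.End ℂ V :=
  ∑ i ∈ Finset.range (Module.finrank ℂ V + 1), (i.factorial : ℂ)⁻¹ • a ^ i

lemma pow_rank_zero {V : Type*} [AddCommGroup V] [Module ℂ V] [FiniteDimensional ℂ V]
    {x : Module.End ℂ V} (hx : IsNilpotent x) : x ^ Module.finrank ℂ V = 0 := by
  have h := hx.charpoly_eq_X_pow_finrank
  have h2 := x.aeval_self_charpoly
  rwa [h, map_pow, Polynomial.aeval_X] at h2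

lemma comm2 {V : Type*} [AddCommGroup V] [Module ℂ V] [FiniteDimensional ℂ V]
    (x y c d : Module.End ℂ V)
    (hc : x*y - y*x = c) (hd : x*c - c*x = d) (hxd : x*d = d*x) :
    ∀ n : ℕ, x^(n+2) * y = y * x^(n+2) + ((n:ℂ)+2) • (c * x^(n+1))
      + ((((n:ℂ)+2) * ((n:ℂ)+1)) / 2) • (d * x^n) := by
  have hcx : x*y = y*x + c := by rw [← hc]; noncomm_ring
  have hdcx : x*c = c*x + d := by rw [← hd]; noncomm_ring
  intro n
  induction n with
  | zero =>
      have q : x^(0+2) = x*x := pow_two x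
      rw [q, pow_zero, mul_one, show (0:ℕ)+1 = 1 from rfl, pow_one, mul_assoc, hcx, mul_add,
        hdcx, ← mul_assoc, hcx, add_mul, mul_assoc]
      match_scalars <;> push_cast <;> ring
  | succ n ih =>
      have p1 : x * x^n = x^(n+1) := (pow_succ' x n).symm
      have p2 : x * x^(n+1) = x^(n+2) := (pow_succ' x (n+1)).symm
      have p3 : x * x^(n+2) = x^(n+3) := (pow_succ' x (n+2)).symm
      have step : x^(n+1+2) * y = x * (x^(n+2) * y) := by
        rw [← mul_assoc, p3]
      rw [show n+1+2 = n+3 from rfl, show n+1+1 = n+2 from rfl] at *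
      rw [step, ih, mul_add, mul_add, mul_smul_comm, mul_smul_comm, ← mul_assoc x y, hcx,
        add_mul, mul_assoc y, p3, ← mul_assoc x c, hdcx, add_mul, mul_assoc c, p2,
        ← mul_assoc x d, hxd, mul_assoc d, p1]
      match_scalars <;> push_cast <;> ring

lemma expKey {V : Type*} [AddCommGroup V] [Module ℂ V] [FiniteDimensional ℂ V]
    (x y c d : Module.End ℂ V) (hx : IsNilpotent x)
    (hc : x*y - y*x = c) (hd : x*c - c*x = d) (hxd : x*d = d*x) :
    expNil x * y = (y + c + (2:ℂ)⁻¹ • d) * expNil x := by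
  by_cases hF0 : Module.finrank ℂ V = 0
  · have : Subsingleton V := Module.finrank_zero_iff.mp hF0
    exact Subsingleton.elim _ _
  obtain ⟨G, hG⟩ : ∃ G, Module.finrank ℂ V = G + 1 :=
    ⟨Module.finrank ℂ V - 1, (Nat.succ_pred_eq_of_ne_zero hF0).symm⟩
  have hxF : x ^ (G+1) = 0 := hG ▸ pow_rank_zero hx
  have hx2 : x ^ (G+2) = 0 := by rw [pow_succ, hxF, zero_mul]
  have hcx : x*y = y*x + c := by rw [← hc]; noncomm_ring
  have cast_ne : ∀ m : ℕ, 0 < m → ((m:ℂ)) ≠ 0 := fun m hm => Nat.cast_ne_zero.mpr (by omega)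
  have hdxG : d * x ^ G = 0 := by
    have h := comm2 x y c d hc hd hxd G
    rw [hx2] at h
    simp only [hxF, mul_zero, zero_mul, smul_zero, zero_add, add_zero] at h
    have h1 : ((G:ℂ)+2) ≠ 0 := by
      have := cast_ne (G+2) (by omega); push_cast at this; exact this
    have h2 : ((G:ℂ)+1) ≠ 0 := by
      have := cast_ne (G+1) (by omega); push_cast at this; exact this
    have hB : (((G:ℂ)+2) * ((G:ℂ)+1)) / 2 ≠ 0 :=
      div_ne_zero (mul_ne_zero h1 h2) two_ne_zero
    rcases smul_eq_zero.mp h.symm with h' | h'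
    · exact absurd h' hB
    · exact h'
  have hrange : Module.finrank ℂ V + 1 = G + 2 := by omega
  have cancel1 : ∀ u F : ℂ, u ≠ 0 → (u*F)⁻¹ * u = F⁻¹ := by
    intro u F hu
    rw [mul_inv, mul_comm u⁻¹ F⁻¹, mul_assoc, inv_mul_cancel₀ hu, mul_one]
  have cancel2 : ∀ u F : ℂ, u ≠ 0 → (u*F)⁻¹ * (u/2) = 2⁻¹ * F⁻¹ := by
    intro u F hu
    rw [mul_inv, mul_comm u⁻¹ F⁻¹, mul_assoc, div_eq_mul_inv, ← mul_assoc u⁻¹,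
      inv_mul_cancel₀ hu, one_mul, mul_comm]
  have scalar1 : ∀ i : ℕ, (((i+2).factorial:ℂ))⁻¹ * ((i:ℂ)+2) = (((i+1).factorial:ℂ))⁻¹ := by
    intro i
    have h1 : ((i:ℂ)+2) ≠ 0 := by
      have := cast_ne (i+2) (by omega); push_cast at this; exact this
    have f2 : (((i+2).factorial:ℂ)) = ((i:ℂ)+2) * (((i+1).factorial:ℂ)) := by
      rw [Nat.factorial_succ]; push_cast; ring
    rw [f2]; exact cancel1 _ _ h1
  have scalar2 : ∀ i : ℕ,
      (((i+2).factorial:ℂ))⁻¹ * ((((i:ℂ)+2) * ((i:ℂ)+1)) / 2) = 2⁻¹ * ((i.factorial:ℂ))⁻¹ := by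
    intro i
    have h1 : ((i:ℂ)+2) ≠ 0 := by
      have := cast_ne (i+2) (by omega); push_cast at this; exact this
    have h2 : ((i:ℂ)+1) ≠ 0 := by
      have := cast_ne (i+1) (by omega); push_cast at this; exact this
    have f2 : (((i+2).factorial:ℂ)) = (((i:ℂ)+2) * ((i:ℂ)+1)) * ((i.factorial:ℂ)) := by
      rw [Nat.factorial_succ, Nat.factorial_succ]; push_cast; ring
    rw [f2]; exact cancel2 _ _ (mul_ne_zero h1 h2)
  have termEq : ∀ i : ℕ, (((i+2).factorial:ℂ))⁻¹ • (x^(i+2) * y)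
      = (((i+2).factorial:ℂ))⁻¹ • (y * x^(i+2)) + (((i+1).factorial:ℂ))⁻¹ • (c * x^(i+1))
        + (2⁻¹ * ((i.factorial:ℂ))⁻¹) • (d * x^i) := by
    intro i
    rw [comm2 x y c d hc hd hxd i, smul_add, smul_add, smul_smul, smul_smul,
      scalar1 i, scalar2 i]
  have lhs_eq : expNil x * y = (∑ i ∈ Finset.range G,
      ((((i+2).factorial:ℂ))⁻¹ • (y * x^(i+2)) + (((i+1).factorial:ℂ))⁻¹ • (c * x^(i+1))
        + (2⁻¹ * ((i.factorial:ℂ))⁻¹) • (d * x^i))) + ((y*x + c) + y) := by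
    rw [expNil, hrange, Finset.sum_mul]
    simp only [smul_mul_assoc]
    rw [Finset.sum_range_succ', Finset.sum_range_succ']
    simp only [zero_add, Nat.add_assoc, Nat.reduceAdd, pow_zero, one_mul, Nat.factorial_zero,
      Nat.factorial_one, Nat.cast_one, inv_one, one_smul, pow_one]
    rw [Finset.sum_congr rfl (fun i _ => termEq i), hcx]
    abel
  have rhs_y : y * expNil x = (∑ i ∈ Finset.range G,
      (((i+2).factorial:ℂ))⁻¹ • (y * x^(i+2))) + ((y*x) + y) := by
    rw [expNil, hrange, Finset.mul_sum]
    simp only [mul_smul_comm]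
    rw [Finset.sum_range_succ', Finset.sum_range_succ']
    simp only [zero_add, Nat.add_assoc, Nat.reduceAdd, pow_zero, mul_one, Nat.factorial_zero,
      Nat.factorial_one, Nat.cast_one, inv_one, one_smul, pow_one]
    abel
  have rhs_c : c * expNil x = (∑ i ∈ Finset.range G,
      (((i+1).factorial:ℂ))⁻¹ • (c * x^(i+1))) + c := by
    rw [expNil, hrange, Finset.mul_sum]
    simp only [mul_smul_comm]
    rw [Finset.sum_range_succ, hxF]
    simp only [mul_zero, smul_zero, add_zero]
    rw [Finset.sum_range_succ']
    simp only [zero_add, pow_zero, mul_one, Nat.factorial_zero, Nat.cast_one, inv_one, one_smul]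
  have rhs_d : ((2:ℂ)⁻¹ • d) * expNil x = ∑ i ∈ Finset.range G,
      (2⁻¹ * ((i.factorial:ℂ))⁻¹) • (d * x^i) := by
    rw [smul_mul_assoc, expNil, hrange, Finset.mul_sum]
    simp only [mul_smul_comm]
    rw [Finset.sum_range_succ, hxF]
    simp only [mul_zero, smul_zero, add_zero]
    rw [Finset.sum_range_succ, hdxG]
    simp only [smul_zero, add_zero]
    rw [Finset.smul_sum]
    exact Finset.sum_congr rfl fun i _ => by rw [smul_smul]
  have rhs_eq : (y + c + (2:ℂ)⁻¹ • d) * expNil x = (∑ i ∈ Finset.range G,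
      ((((i+2).factorial:ℂ))⁻¹ • (y * x^(i+2)) + (((i+1).factorial:ℂ))⁻¹ • (c * x^(i+1))
        + (2⁻¹ * ((i.factorial:ℂ))⁻¹) • (d * x^i))) + ((y*x + c) + y) := by
    rw [add_mul, add_mul, rhs_y, rhs_c, rhs_d, Finset.sum_add_distrib, Finset.sum_add_distrib]
    abel
  rw [lhs_eq, rhs_eq]

/-- For an sl₂-triple `(a, a†, h)` of endomorphisms of a finite-dimensional complex vector
space with `a`, `a†` nilpotent, one has `exp(-a) ∘ exp(a†) ∘ a = -a† ∘ exp(-a) ∘ exp(a†)`. -/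
theorem stmt0 {V : Type*} [AddCommGroup V] [Module ℂ V] [FiniteDimensional ℂ V]
    (a adag h : Module.End ℂ V)
    (h1 : a * adag - adag * a = h)
    (h2 : h * a - a * h = (2 : ℂ) • a)
    (h3 : h * adag - adag * h = -((2 : ℂ) • adag))
    (ha : IsNilpotent a) (hadag : IsNilpotent adag) :
    expNil (-a) * expNil adag * a = -adag * (expNil (-a) * expNil adag) := by
  -- first commutation: expNil adag * a = (a - h - adag) * expNil adag
  have hc1 : adag * a - a * adag = -h := by rw [← h1]; noncomm_ring
  have hd1 : adag * (-h) - (-h) * adag = -((2:ℂ) • adag) := by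
    have e : adag * (-h) - (-h) * adag = h * adag - adag * h := by noncomm_ring
    rw [e, h3]
  have hxd1 : adag * (-((2:ℂ) • adag)) = (-((2:ℂ) • adag)) * adag := by
    simp [mul_smul_comm, smul_mul_assoc]
  have L1 := expKey adag a (-h) (-((2:ℂ) • adag)) hadag hc1 hd1 hxd1
  have e1 : a + -h + (2:ℂ)⁻¹ • -((2:ℂ) • adag) = a - h - adag := by module
  rw [e1] at L1
  -- second commutation: expNil (-a) * (a - h - adag) = (-adag) * expNil (-a)
  have hc2 : (-a) * (a - h - adag) - (a - h - adag) * (-a) = h - (2:ℂ) • a := by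
    have e : (-a) * (a - h - adag) - (a - h - adag) * (-a)
        = -(h*a - a*h) + (a*adag - adag*a) := by noncomm_ring
    rw [e, h2, h1]; abel
  have hd2 : (-a) * (h - (2:ℂ) • a) - (h - (2:ℂ) • a) * (-a) = (2:ℂ) • a := by
    have hw : a * ((2:ℂ) • a) = ((2:ℂ) • a) * a := by
      simp [mul_smul_comm, smul_mul_assoc]
    have gen : (-a) * (h - (2:ℂ) • a) - (h - (2:ℂ) • a) * (-a)
        = (h*a - a*h) + (a * ((2:ℂ) • a) - ((2:ℂ) • a) * a) := by
      simp only [mul_sub, sub_mul, neg_mul, mul_neg, neg_neg]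
      module
    rw [gen, hw, sub_self, add_zero, h2]
  have hxd2 : (-a) * ((2:ℂ) • a) = ((2:ℂ) • a) * (-a) := by
    simp [mul_smul_comm, smul_mul_assoc]
  have L2 := expKey (-a) (a - h - adag) (h - (2:ℂ) • a) ((2:ℂ) • a) ha.neg hc2 hd2 hxd2
  have e2 : a - h - adag + (h - (2:ℂ) • a) + (2:ℂ)⁻¹ • ((2:ℂ) • a) = -adag := by module
  rw [e2] at L2
  calc expNil (-a) * expNil adag * a = expNil (-a) * (expNil adag * a) := mul_assoc _ _ _
    _ = expNil (-a) * ((a - h - adag) * expNil adag) := by rw [L1]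
    _ = (expNil (-a) * (a - h - adag)) * expNil adag := (mul_assoc _ _ _).symm
    _ = ((-adag) * expNil (-a)) * expNil adag := by rw [L2]
    _ = -adag * (expNil (-a) * expNil adag) := mul_assoc _ _ _
end

section
/- Let V be a finite-dimensional complex vector space, N a nilpotent endomorphism of V with weight filtration (W_k)_{k∈ℤ}, and κ : V → V a complex-antilinear bijection such that κ ∘ N = -N ∘ κ. Then κ preserves the weight filtration: κ(W_k) = W_k for all k ∈ ℤ. -/
/-- `W` is a weight filtration for `N` (see the context of the statement). -/
def IsWeightFiltration {V : Type*} [AddCommGroup V] [Module ℂ V]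
    (N : Module.End ℂ V) (W : ℤ → Submodule ℂ V) : Prop :=
  Monotone W ∧
  (∃ k₀ : ℤ, ∀ k ≤ k₀, W k = ⊥) ∧
  (∃ k₁ : ℤ, ∀ k ≥ k₁, W k = ⊤) ∧
  (∀ k : ℤ, ∀ x ∈ W k, N x ∈ W (k - 2)) ∧
  (∀ k : ℕ,
    (∀ x ∈ W (k : ℤ), (N ^ k) x ∈ W (-(k : ℤ) - 1) → x ∈ W ((k : ℤ) - 1)) ∧
    (∀ y ∈ W (-(k : ℤ)), ∃ x ∈ W (k : ℤ), y - (N ^ k) x ∈ W (-(k : ℤ) - 1)))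

lemma wf_pow {V : Type*} [AddCommGroup V] [Module ℂ V]
    (N : Module.End ℂ V) (W : ℤ → Submodule ℂ V)
    (hstep : ∀ k : ℤ, ∀ x ∈ W k, N x ∈ W (k - 2)) :
    ∀ (j : ℕ) (k : ℤ), ∀ x ∈ W k, (N ^ j) x ∈ W (k - 2 * j) := by
  intro j
  induction j with
  | zero => intro k x hx; simpa using hx
  | succ j ih =>
    intro k x hx
    have h1 := hstep k x hx
    have h2 := ih (k - 2) (N x) h1
    have : (N ^ (j + 1)) x = (N ^ j) (N x) := by
      rw [pow_succ, Module.End.mul_apply]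
    rw [this]
    convert h2 using 2
    push_cast; ring

lemma weight_filtration_unique {V : Type*} [AddCommGroup V] [Module ℂ V]
    (N : Module.End ℂ V) (W W' : ℤ → Submodule ℂ V)
    (hW : IsWeightFiltration N W) (hW' : IsWeightFiltration N W') :
    ∀ k : ℤ, W k = W' k := by
  obtain ⟨mono, ⟨k₀, hbot⟩, ⟨k₁, htop⟩, hstep, hiso⟩ := hW
  obtain ⟨mono', ⟨k₀', hbot'⟩, ⟨k₁', htop'⟩, hstep', hiso'⟩ := hW'
  have hpow := wf_pow N W hstep
  have hpow' := wf_pow N W' hstep'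
  -- characterization lemmas
  have FA : ∀ (k : ℕ) (x : V), x ∈ W ((k : ℤ) - 1) ↔
      x ∈ W (k : ℤ) ∧ (N ^ k) x ∈ W (-(k : ℤ) - 1) := by
    intro k x
    constructor
    · intro hx
      refine ⟨mono (by omega) hx, ?_⟩
      have := hpow k ((k : ℤ) - 1) x hx
      convert this using 2
      push_cast; ring
    · intro ⟨h1, h2⟩; exact (hiso k).1 x h1 h2
  have FA' : ∀ (k : ℕ) (x : V), x ∈ W' ((k : ℤ) - 1) ↔
      x ∈ W' (k : ℤ) ∧ (N ^ k) x ∈ W' (-(k : ℤ) - 1) := by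
    intro k x
    constructor
    · intro hx
      refine ⟨mono' (by omega) hx, ?_⟩
      have := hpow' k ((k : ℤ) - 1) x hx
      convert this using 2
      push_cast; ring
    · intro ⟨h1, h2⟩; exact (hiso' k).1 x h1 h2
  have FB : ∀ (k : ℕ) (y : V), y ∈ W (-(k : ℤ)) ↔
      ∃ x, x ∈ W (k : ℤ) ∧ y - (N ^ k) x ∈ W (-(k : ℤ) - 1) := by
    intro k y
    constructor
    · intro hy
      obtain ⟨x, hx, h⟩ := (hiso k).2 y hy
      exact ⟨x, hx, h⟩
    · intro ⟨x, hx, h⟩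
      have h1 : (N ^ k) x ∈ W (-(k : ℤ)) := by
        have := hpow k (k : ℤ) x hx
        convert this using 2; push_cast; ring
      have h2 : y - (N ^ k) x ∈ W (-(k : ℤ)) := mono (by omega) h
      have := Submodule.add_mem _ h2 h1
      simpa using this
  have FB' : ∀ (k : ℕ) (y : V), y ∈ W' (-(k : ℤ)) ↔
      ∃ x, x ∈ W' (k : ℤ) ∧ y - (N ^ k) x ∈ W' (-(k : ℤ) - 1) := by
    intro k y
    constructor
    · intro hy
      obtain ⟨x, hx, h⟩ := (hiso' k).2 y hy
      exact ⟨x, hx, h⟩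
    · intro ⟨x, hx, h⟩
      have h1 : (N ^ k) x ∈ W' (-(k : ℤ)) := by
        have := hpow' k (k : ℤ) x hx
        convert this using 2; push_cast; ring
      have h2 : y - (N ^ k) x ∈ W' (-(k : ℤ)) := mono' (by omega) h
      have := Submodule.add_mem _ h2 h1
      simpa using this
  -- choose a large bound
  set K : ℕ := (max (max k₁ k₁') (max (-k₀ - 1) (-k₀' - 1))).toNat with hK
  have hKtop : k₁ ≤ (K : ℤ) := le_trans (le_trans (le_max_left _ _) (le_max_left _ _)) (Int.self_le_toNat _)
  have hKtop' : k₁' ≤ (K : ℤ) := le_trans (le_trans (le_max_right _ _) (le_max_left _ _)) (Int.self_le_toNat _)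
  have hKbot : -(K : ℤ) - 1 ≤ k₀ := by
    have : -k₀ - 1 ≤ (K : ℤ) := le_trans (le_trans (le_max_left _ _) (le_max_right _ _)) (Int.self_le_toNat _)
    omega
  have hKbot' : -(K : ℤ) - 1 ≤ k₀' := by
    have : -k₀' - 1 ≤ (K : ℤ) := le_trans (le_trans (le_max_right _ _) (le_max_right _ _)) (Int.self_le_toNat _)
    omega
  -- Q m : equality at levels m and -m-1
  have base : ∀ m : ℕ, K ≤ m → W (m : ℤ) = W' (m : ℤ) ∧ W (-(m : ℤ) - 1) = W' (-(m : ℤ) - 1) := by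
    intro m hm
    have hm' : (K : ℤ) ≤ (m : ℤ) := by exact_mod_cast hm
    constructor
    · rw [htop _ (le_trans hKtop hm'), htop' _ (le_trans hKtop' hm')]
    · rw [hbot _ (by omega), hbot' _ (by omega)]
  have step : ∀ m : ℕ,
      (W ((m : ℤ) + 1) = W' ((m : ℤ) + 1) ∧ W (-(m : ℤ) - 2) = W' (-(m : ℤ) - 2)) →
      W (m : ℤ) = W' (m : ℤ) ∧ W (-(m : ℤ) - 1) = W' (-(m : ℤ) - 1) := by
    intro m ⟨ih1, ih2⟩
    have c1 : ((m + 1 : ℕ) : ℤ) - 1 = (m : ℤ) := by push_cast; ring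
    have c2 : ((m + 1 : ℕ) : ℤ) = (m : ℤ) + 1 := by push_cast; ring
    have c3 : -((m + 1 : ℕ) : ℤ) - 1 = -(m : ℤ) - 2 := by push_cast; ring
    have c4 : -((m + 1 : ℕ) : ℤ) = -(m : ℤ) - 1 := by push_cast; ring
    constructor
    · ext x
      have hA := FA (m + 1) x
      have hA' := FA' (m + 1) x
      rw [c1, c3, c2] at hA hA'
      rw [hA, hA', ih1, ih2]
    · ext y
      have hB := FB (m + 1) y
      have hB' := FB' (m + 1) y
      rw [c3, c4, c2] at hB hB'
      rw [hB, hB']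
      constructor
      · intro ⟨x, hx, h⟩; exact ⟨x, ih1 ▸ hx, ih2 ▸ h⟩
      · intro ⟨x, hx, h⟩; exact ⟨x, ih1 ▸ hx, ih2 ▸ h⟩
  have Qall : ∀ (d m : ℕ), K ≤ m + d → W (m : ℤ) = W' (m : ℤ) ∧ W (-(m : ℤ) - 1) = W' (-(m : ℤ) - 1) := by
    intro d
    induction d with
    | zero => intro m hm; exact base m (by omega)
    | succ d ih =>
      intro m hm
      by_cases h : K ≤ m
      · exact base m h
      · have := ih (m + 1) (by omega)
        apply step
        constructor
        · have h1 := this.1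
          rwa [show ((m + 1 : ℕ) : ℤ) = (m : ℤ) + 1 from by push_cast; ring] at h1
        · have h2 := this.2
          rwa [show -((m + 1 : ℕ) : ℤ) - 1 = -(m : ℤ) - 2 from by push_cast; ring] at h2
  have Q : ∀ m : ℕ, W (m : ℤ) = W' (m : ℤ) ∧ W (-(m : ℤ) - 1) = W' (-(m : ℤ) - 1) :=
    fun m => Qall K m (by omega)
  intro k
  rcases le_or_gt 0 k with hk | hk
  · have := (Q k.toNat).1
    rwa [Int.toNat_of_nonneg hk] at this
  · have hk' : 0 ≤ -k - 1 := by omega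
    have := (Q (-k - 1).toNat).2
    rw [Int.toNat_of_nonneg hk'] at this
    convert this using 2 <;> omega

/-- If `κ` is a complex-antilinear bijection anticommuting with a nilpotent endomorphism
`N`, then `κ` preserves the weight filtration of `N`: `κ(W_k) = W_k` for all `k`. -/
theorem stmt4 {V : Type*} [AddCommGroup V] [Module ℂ V] [FiniteDimensional ℂ V]
    (N : Module.End ℂ V) (hN : IsNilpotent N)
    (W : ℤ → Submodule ℂ V) (hW : IsWeightFiltration N W)
    (κ : V →ₛₗ[starRingEnd ℂ] V) (hκbij : Function.Bijective κ)
    (hκN : ∀ v : V, κ (N v) = -(N (κ v))) :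
    ∀ k : ℤ, ∀ v : V, κ v ∈ W k ↔ v ∈ W k := by
  obtain ⟨mono, ⟨k₀, hbot⟩, ⟨k₁, htop⟩, hstep, hiso⟩ := hW
  have hWfull : IsWeightFiltration N W := ⟨mono, ⟨k₀, hbot⟩, ⟨k₁, htop⟩, hstep, hiso⟩
  -- commutation of κ with powers of N
  have hcomm : ∀ (j : ℕ) (v : V), κ ((N ^ j) v) = ((-1 : ℂ) ^ j) • (N ^ j) (κ v) := by
    intro j
    induction j with
    | zero => intro v; simp
    | succ j ih =>
      intro v
      have h1 : (N ^ (j + 1)) v = (N ^ j) (N v) := by rw [pow_succ, Module.End.mul_apply]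
      have h2 : (N ^ (j + 1)) (κ v) = (N ^ j) (N (κ v)) := by rw [pow_succ, Module.End.mul_apply]
      rw [h1, ih (N v), hκN v, map_neg, h2]
      rw [pow_succ]
      module
  set W' : ℤ → Submodule ℂ V := fun k => (W k).comap κ with hW'def
  have hmemW' : ∀ (k : ℤ) (v : V), v ∈ W' k ↔ κ v ∈ W k := fun k v => Iff.rfl
  have hW' : IsWeightFiltration N W' := by
    refine ⟨?_, ⟨k₀, ?_⟩, ⟨k₁, ?_⟩, ?_, ?_⟩
    · intro a b hab
      exact Submodule.comap_mono (mono hab)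
    · intro k hk
      rw [hW'def]
      simp only
      rw [hbot k hk]
      ext x
      simp only [Submodule.mem_comap, Submodule.mem_bot]
      constructor
      · intro hx
        apply hκbij.1
        rw [hx, map_zero]
      · intro hx; rw [hx, map_zero]
    · intro k hk
      rw [hW'def]; simp only [htop k hk, Submodule.comap_top]
    · intro k x hx
      rw [hmemW'] at hx ⊢
      rw [hκN x]
      exact Submodule.neg_mem _ (hstep k _ hx)
    · intro k
      have hunit : ∀ v : V, ((-1 : ℂ) ^ k) • ((-1 : ℂ) ^ k) • v = v := by
        intro v
        rw [smul_smul, ← mul_pow]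
        norm_num
      constructor
      · intro x hx hNx
        rw [hmemW'] at hx hNx ⊢
        rw [hcomm k x] at hNx
        have : (N ^ k) (κ x) ∈ W (-(k : ℤ) - 1) := by
          have := Submodule.smul_mem _ ((-1 : ℂ) ^ k) hNx
          rwa [hunit] at this
        exact (hiso k).1 (κ x) hx this
      · intro y hy
        rw [hmemW'] at hy
        obtain ⟨x', hx', h⟩ := (hiso k).2 (κ y) hy
        obtain ⟨z, hz⟩ := hκbij.2 (((-1 : ℂ) ^ k) • x')
        refine ⟨z, ?_, ?_⟩
        · rw [hmemW', hz]
          exact Submodule.smul_mem _ _ hx'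
        · rw [hmemW', map_sub, hcomm k z, hz, map_smul, smul_smul, ← mul_pow]
          norm_num
          exact h
  have := weight_filtration_unique N W' W hW' hWfull
  intro k v
  rw [← hmemW' k v, this k]
end

section
/- Let H be a free module over the Laurent polynomial ring ℂ[z, z⁻¹], let F ⊆ H be a ℂ[z]-submodule and G ⊆ H a ℂ[z⁻¹]-submodule, and suppose that as complex vector spaces H = F ⊕ z⁻¹G. Then the natural ℂ-linear map F ∩ G → F / zF (restriction of the quotient map F → F/zF) is an isomorphism. -/
/-- Multiplication by the Laurent monomial `z^k` on a module `H` over `ℂ[z,z⁻¹]`,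
viewed as a `ℂ`-linear endomorphism of `H`. -/
noncomputable def mulByT (H : Type*) [AddCommGroup H] [Module (LaurentPolynomial ℂ) H]
    [Module ℂ H] [IsScalarTower ℂ (LaurentPolynomial ℂ) H] (k : ℤ) : H →ₗ[ℂ] H where
  toFun x := (LaurentPolynomial.T k : LaurentPolynomial ℂ) • x
  map_add' x y := smul_add _ x y
  map_smul' c x := (smul_comm c (LaurentPolynomial.T k : LaurentPolynomial ℂ) x).symm

/-- Let `H` be a free module over the Laurent polynomial ring `ℂ[z,z⁻¹]`, `F ⊆ H` a
`ℂ[z]`-submodule and `G ⊆ H` a `ℂ[z⁻¹]`-submodule with `H = F ⊕ z⁻¹G` as complex vector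
spaces. Then the natural map `F ∩ G → F / zF` is an isomorphism. -/
theorem stmt5 (H : Type*) [AddCommGroup H] [Module (LaurentPolynomial ℂ) H]
    [Module ℂ H] [IsScalarTower ℂ (LaurentPolynomial ℂ) H]
    [Module.Free (LaurentPolynomial ℂ) H]
    (F G : Submodule ℂ H)
    (hF : ∀ x ∈ F, (LaurentPolynomial.T 1 : LaurentPolynomial ℂ) • x ∈ F)
    (hG : ∀ x ∈ G, (LaurentPolynomial.T (-1) : LaurentPolynomial ℂ) • x ∈ G)
    (zF zinvG : Submodule ℂ H)
    (hzF : zF = Submodule.map (mulByT H 1) F)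
    (hzinvG : zinvG = Submodule.map (mulByT H (-1)) G)
    (hdisj : F ⊓ zinvG = ⊥) (hcodisj : F ⊔ zinvG = ⊤) :
    Function.Bijective
      ((Submodule.mkQ (zF.comap F.subtype)).comp
        (Submodule.inclusion (inf_le_left : F ⊓ G ≤ F))) := by
  have hTT : ∀ x : H, (LaurentPolynomial.T 1 : LaurentPolynomial ℂ) •
      ((LaurentPolynomial.T (-1) : LaurentPolynomial ℂ) • x) = x := by
    intro x
    rw [smul_smul, ← LaurentPolynomial.T_add]
    norm_num [LaurentPolynomial.T_zero]
  have hTT' : ∀ x : H, (LaurentPolynomial.T (-1) : LaurentPolynomial ℂ) •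
      ((LaurentPolynomial.T 1 : LaurentPolynomial ℂ) • x) = x := by
    intro x
    rw [smul_smul, ← LaurentPolynomial.T_add]
    norm_num [LaurentPolynomial.T_zero]
  constructor
  · -- injective
    intro x y hxy
    have hsub : ((Submodule.mkQ (zF.comap F.subtype)).comp
        (Submodule.inclusion (inf_le_left : F ⊓ G ≤ F))) (x - y) = 0 := by
      rw [map_sub, hxy, sub_self]
    have hmem : ((x : H) - (y : H)) ∈ zF := by
      have := (Submodule.Quotient.mk_eq_zero (zF.comap F.subtype)).mp hsub
      simpa using this
    rw [hzF] at hmem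
    obtain ⟨f, hfF, hf⟩ := hmem
    have hfval : (mulByT H 1) f = (LaurentPolynomial.T 1 : LaurentPolynomial ℂ) • f := rfl
    have hfeq : f = (LaurentPolynomial.T (-1) : LaurentPolynomial ℂ) • ((x : H) - (y : H)) := by
      rw [← hf, hfval, hTT']
    have hxyG : ((x : H) - (y : H)) ∈ G := sub_mem x.2.2 y.2.2
    have hfG : f ∈ zinvG := by
      rw [hzinvG]
      exact ⟨_, hxyG, hfeq.symm⟩
    have : f ∈ F ⊓ zinvG := ⟨hfF, hfG⟩
    rw [hdisj] at this
    have hf0 : f = 0 := this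
    have : (x : H) - (y : H) = 0 := by
      rw [← hf, hfval, hf0, smul_zero]
    exact Subtype.ext (sub_eq_zero.mp this)
  · -- surjective
    intro q
    obtain ⟨f, rfl⟩ := Submodule.mkQ_surjective _ q
    have htop : (LaurentPolynomial.T (-1) : LaurentPolynomial ℂ) • (f : H) ∈ F ⊔ zinvG := by
      rw [hcodisj]; trivial
    obtain ⟨a, haF, b, hb, hab⟩ := Submodule.mem_sup.mp htop
    obtain ⟨g', hg'G, hg'⟩ := hzinvG ▸ hb
    -- b = T(-1) • g'
    have hbval : b = (LaurentPolynomial.T (-1) : LaurentPolynomial ℂ) • g' := hg'.symm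
    set gval : H := (f : H) - (LaurentPolynomial.T 1 : LaurentPolynomial ℂ) • a with hgval
    have hgF : gval ∈ F := sub_mem f.2 (hF a haF)
    have hgG : gval ∈ G := by
      have : gval = g' := by
        have := congrArg (fun x => (LaurentPolynomial.T 1 : LaurentPolynomial ℂ) • x) hab
        simp only [smul_add, hTT] at this
        rw [hgval, ← this, hbval, hTT]
        abel
      rw [this]; exact hg'G
    refine ⟨⟨gval, hgF, hgG⟩, ?_⟩
    have : ((Submodule.inclusion (inf_le_left : F ⊓ G ≤ F)) ⟨gval, hgF, hgG⟩ : F) = ⟨gval, hgF⟩ := rfl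
    simp only [LinearMap.comp_apply, this, Submodule.mkQ_apply]
    rw [Submodule.Quotient.eq]
    have : (⟨gval, hgF⟩ - f : F) = ⟨-((LaurentPolynomial.T 1 : LaurentPolynomial ℂ) • a), by
      exact neg_mem (hF a haF)⟩ := by
      apply Subtype.ext; simp [hgval]
    rw [this]
    simp only [Submodule.mem_comap, Submodule.subtype_apply]
    rw [hzF]
    exact neg_mem ⟨a, haF, rfl⟩
end

section
/- Let V be a finite-dimensional complex vector space with a nondegenerate bilinear form B, and let μ, ρ ∈ End(V) satisfy: (i) B(μ u, v) + B(u, μ v) = 0, (ii) B(ρ u, v) = B(u, ρ v), (iii) [μ, ρ] = ρ, and (iv) μ is diagonalizable and ρ is nilpotent. Then for every complex number w and all α, β ∈ V, B( e^{-(w + πi)μ} e^{(w + πi)ρ} α , e^{-wμ} e^{wρ} β ) = B( e^{πiρ} α , e^{πiμ} β ). In particular the left-hand side is independent of w. -/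
/-!
Since `μ` is `B`-skew and `ρ` is `B`-symmetric, `exp(-cμ)` is `B`-adjoint to `exp(cμ)` and
`exp(cρ)` to itself, so all exponentials can be moved into the second argument of `B`. The relation
`[μ, ρ] = ρ` gives `exp(cμ) ρ = e^c ρ exp(cμ)`, hence `exp(cμ) exp(sρ) = exp(e^c s ρ) exp(cμ)`;
with `e^{πi} = -1` the resulting operator collapses to `exp(πiρ) exp(πiμ)`.
-/

open NormedSpace LinearMap

theorem LinearMap.IsAdjointPair.iterate {R M N : Type*} [CommSemiring R] [AddCommMonoid M]
    [Module R M] [AddCommMonoid N] [Module R N] {B : M →ₗ[R] M →ₗ[R] N} {f g : M → M}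
    (h : IsAdjointPair B B f g) (n : ℕ) : IsAdjointPair B B f^[n] g^[n] := by
  induction n with
  | zero => exact isAdjointPair_id
  | succ n ih => rw [Function.iterate_succ', Function.iterate_succ]; exact ih.comp h

theorem LinearMap.IsAdjointPair.exp {𝕜 V : Type*} [RCLike 𝕜] [NormedAddCommGroup V]
    [NormedSpace 𝕜 V] [FiniteDimensional 𝕜 V] {B : V →ₗ[𝕜] V →ₗ[𝕜] 𝕜} {f g : V →L[𝕜] V}
    (h : IsAdjointPair B B f g) : IsAdjointPair B B ⇑(exp f) ⇑(exp g) := by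
  have := FiniteDimensional.complete 𝕜 V
  intro u v
  let evalLeft : (V →L[𝕜] V) →L[𝕜] 𝕜 :=
    (B.flip v).toContinuousLinearMap.comp (ContinuousLinearMap.apply 𝕜 V u)
  let evalRight : (V →L[𝕜] V) →L[𝕜] 𝕜 :=
    (B u).toContinuousLinearMap.comp (ContinuousLinearMap.apply 𝕜 V v)
  refine (evalLeft.hasSum (exp_series_hasSum_exp' (𝕂 := 𝕜) f)).unique ?_
  convert evalRight.hasSum (exp_series_hasSum_exp' (𝕂 := 𝕜) g) using 2 with n
  · simp [evalLeft, evalRight, (h.iterate n) u v]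
  · rfl

section LieRelation

variable {𝔸 : Type*} [NormedRing 𝔸] [NormedAlgebra ℂ 𝔸] [CompleteSpace 𝔸] {μ ρ : 𝔸}

theorem semiconjBy_exp_smul_of_lie_eq (h : μ * ρ - ρ * μ = ρ) (c : ℂ) :
    SemiconjBy (exp (c • μ)) ρ (Complex.exp c • ρ) := by
  let _ : NormedAlgebra ℚ 𝔸 := .restrictScalars ℚ ℂ 𝔸
  have hρ : SemiconjBy ρ (c • μ + c • 1) (c • μ) := by
    rw [SemiconjBy, ← smul_add, mul_smul_comm, smul_mul_assoc, mul_add, mul_one,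
      ← sub_eq_iff_eq_add'.mp h]
  have hexp : exp (c • μ + c • 1) = Complex.exp c • exp (c • μ) := by
    rw [exp_add_of_commute ((Commute.one_right μ).smul_left c |>.smul_right c),
      ← Algebra.algebraMap_eq_smul_one, ← algebraMap_exp_comm (𝕂 := ℂ),
      Algebra.algebraMap_eq_smul_one, mul_smul_one, Complex.exp_eq_exp_ℂ]
  have hconj := hρ.exp_right
  rw [hexp] at hconj
  rw [SemiconjBy, smul_mul_assoc, ← hconj, mul_smul_comm]

theorem exp_smul_mul_exp_smul_of_lie_eq (h : μ * ρ - ρ * μ = ρ) (c s : ℂ) :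
    exp (c • μ) * exp (s • ρ) = exp ((Complex.exp c * s) • ρ) * exp (c • μ) := by
  let _ : NormedAlgebra ℚ 𝔸 := .restrictScalars ℚ ℂ 𝔸
  have := ((semiconjBy_exp_smul_of_lie_eq h c).smul_right s).exp_right
  rwa [smul_smul, mul_comm s] at this

theorem exp_smul_mul_exp_smul_mul_exp_neg_smul_mul_exp_smul_of_lie_eq
    (h : μ * ρ - ρ * μ = ρ) (a b : ℂ) :
    exp (a • ρ) * (exp (a • μ) * (exp (-(b • μ)) * exp (b • ρ)))
      = exp ((a + Complex.exp (a - b) * b) • ρ) * exp ((a - b) • μ) := by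
  let _ : NormedAlgebra ℚ 𝔸 := .restrictScalars ℚ ℂ 𝔸
  have hμ : exp (a • μ) * exp (-(b • μ)) = exp ((a - b) • μ) := by
    rw [← exp_add_of_commute ((Commute.refl μ).smul_left a |>.smul_right b).neg_right, sub_smul,
      sub_eq_add_neg]
  rw [← mul_assoc (exp (a • μ)), hμ, exp_smul_mul_exp_smul_of_lie_eq h, ← mul_assoc,
    ← exp_add_of_commute ((Commute.refl ρ).smul_left a |>.smul_right _), add_smul]

end LieRelation

theorem stmt12_general (V : Type*) [NormedAddCommGroup V] [NormedSpace ℂ V] [FiniteDimensional ℂ V]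
    (B : V →ₗ[ℂ] V →ₗ[ℂ] ℂ)
    (μ ρ : V →L[ℂ] V)
    (h1 : ∀ u v : V, B (μ u) v + B u (μ v) = 0)
    (h2 : ∀ u v : V, B (ρ u) v = B u (ρ v))
    (h3 : μ * ρ - ρ * μ = ρ) :
    ∀ (w : ℂ) (α β : V),
      B ((NormedSpace.exp (-((w + (Real.pi : ℂ) * Complex.I) • μ)) *
            NormedSpace.exp ((w + (Real.pi : ℂ) * Complex.I) • ρ)) α)
        ((NormedSpace.exp (-(w • μ)) * NormedSpace.exp (w • ρ)) β)
      = B ((NormedSpace.exp (((Real.pi : ℂ) * Complex.I) • ρ)) α)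
          ((NormedSpace.exp (((Real.pi : ℂ) * Complex.I) • μ)) β) := by
  intro w α β
  set P : ℂ := (Real.pi : ℂ) * Complex.I
  have hμ : ∀ c : ℂ, IsAdjointPair B B ⇑(-(c • μ)) ⇑(c • μ) := fun c => by
    have hμ_skew : IsAdjointPair B B ⇑(-μ) ⇑μ := fun u v => by
      rw [_root_.neg_apply, map_neg, LinearMap.neg_apply, ← add_eq_zero_iff_neg_eq]
      exact h1 u v
    simpa only [← smul_neg, FunLike.coe_smul] using hμ_skew.smul c
  have hρ : ∀ c : ℂ, IsAdjointPair B B ⇑(c • ρ) ⇑(c • ρ) := fun c => by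
    simpa only [FunLike.coe_smul] using IsAdjointPair.smul c h2
  have hop : exp ((w + P) • ρ) * (exp ((w + P) • μ) * (exp (-(w • μ)) * exp (w • ρ)))
      = exp (P • ρ) * exp (P • μ) := by
    rw [exp_smul_mul_exp_smul_mul_exp_neg_smul_mul_exp_smul_of_lie_eq h3, add_sub_cancel_left,
      Complex.exp_pi_mul_I, neg_one_mul, add_neg_cancel_comm]
  calc _ = B α ((exp ((w + P) • ρ) * (exp ((w + P) • μ) * (exp (-(w • μ)) * exp (w • ρ)))) β) :=
        by rw [mul_apply_eq_comp, (hμ _).exp, (hρ _).exp]; rfl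
    _ = _ := by rw [hop, mul_apply_eq_comp, ← (hρ P).exp]

/-- Let `B` be a nondegenerate bilinear form on a finite-dimensional complex vector space,
`μ` skew-adjoint and diagonalizable, `ρ` self-adjoint and nilpotent, with `[μ, ρ] = ρ`.
Then `B(e^{-(w+πi)μ} e^{(w+πi)ρ} α, e^{-wμ} e^{wρ} β) = B(e^{πiρ} α, e^{πiμ} β)` for all
`w ∈ ℂ`; in particular the left-hand side is independent of `w`. -/
theorem stmt12 (V : Type*) [NormedAddCommGroup V] [NormedSpace ℂ V] [FiniteDimensional ℂ V]
    (B : V →ₗ[ℂ] V →ₗ[ℂ] ℂ)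
    (hBnd₁ : ∀ v : V, (∀ u : V, B u v = 0) → v = 0)
    (hBnd₂ : ∀ u : V, (∀ v : V, B u v = 0) → u = 0)
    (μ ρ : V →L[ℂ] V)
    (h1 : ∀ u v : V, B (μ u) v + B u (μ v) = 0)
    (h2 : ∀ u v : V, B (ρ u) v = B u (ρ v))
    (h3 : μ * ρ - ρ * μ = ρ)
    (h4 : ⨆ c : ℂ, Module.End.eigenspace (μ : V →ₗ[ℂ] V) c = ⊤)
    (h5 : IsNilpotent ρ) :
    ∀ (w : ℂ) (α β : V),
      B ((NormedSpace.exp (-((w + (Real.pi : ℂ) * Complex.I) • μ)) *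
            NormedSpace.exp ((w + (Real.pi : ℂ) * Complex.I) • ρ)) α)
        ((NormedSpace.exp (-(w • μ)) * NormedSpace.exp (w • ρ)) β)
      = B ((NormedSpace.exp (((Real.pi : ℂ) * Complex.I) • ρ)) α)
          ((NormedSpace.exp (((Real.pi : ℂ) * Complex.I) • μ)) β) :=
  stmt12_general V B μ ρ h1 h2 h3
end

section
/- In the formal power series ring ℂ[[x]], the following identity holds: G(x/(2πi)) · G(-x/(2πi)) = e^{-x/2} · T(x), where G(y) ∈ ℂ[[y]] is the Taylor expansion at 0 of y ↦ Γ(1+y) (the Gamma function), and T(x) ∈ ℂ[[x]] is the Taylor expansion at 0 of x ↦ x/(1 - e^{-x}) (the Todd series). -/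
/-!
Both sides are Taylor expansions at `0` of analytic germs, and taking Taylor expansions is
multiplicative (Leibniz rule) and commutes with rescaling the variable. Multiplying by the
expansion of `1 - e^{-x}`, a nonzero element of the domain `ℂ[[x]]`, it therefore suffices to
prove the identity of functions `Γ(1 + w) Γ(1 - w) (1 - e^{-x}) = e^{-x/2} x` for
`w = x / (2πi)` near `0`. By `Γ(1 + w) = w Γ(w)` and Euler's reflection formula the left factor
is `πw / sin(πw)`, and `1 - e^{-x} = e^{-x/2} · 2i sin(πw)` while `2πi w = x`.
-/

open Complex
open scoped Nat ContDiff Real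

section Taylor

variable {𝕜 : Type*} [NontriviallyNormedField 𝕜]

theorem iteratedDeriv_comp_const_mul_of_ne_zero {F : Type*} [NormedAddCommGroup F]
    [NormedSpace 𝕜 F] {c : 𝕜} (hc : c ≠ 0) (f : 𝕜 → F) (n : ℕ) (x : 𝕜) :
    iteratedDeriv n (fun y => f (c * y)) x = c ^ n • iteratedDeriv n f (c * x) := by
  let g : 𝕜 ≃L[𝕜] 𝕜 := ContinuousLinearEquiv.unitsEquivAut 𝕜 (Units.mk0 c hc)
  have hg : ∀ y, g y = c * y := fun y => mul_comm y c
  have h := g.iteratedFDerivWithin_comp_right f uniqueDiffOn_univ (Set.mem_univ (g x)) n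
  simp only [Set.preimage_univ, iteratedFDerivWithin_univ] at h
  have hfg : f ∘ g = fun y => f (c * y) := funext fun y => congrArg f (hg y)
  rw [iteratedDeriv_eq_iteratedFDeriv, iteratedDeriv_eq_iteratedFDeriv, ← hfg, h,
    ContinuousMultilinearMap.compContinuousLinearMap_apply, hg]
  have hg1 : (fun _ : Fin n => (g : 𝕜 →L[𝕜] 𝕜) 1) = fun _ => c • (1 : 𝕜) := by
    funext; rw [ContinuousLinearEquiv.coe_coe, hg, smul_eq_mul]
  rw [hg1, ContinuousMultilinearMap.map_smul_univ, Finset.prod_const, Finset.card_univ,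
    Fintype.card_fin]

noncomputable def taylorSeries (f : 𝕜 → 𝕜) : PowerSeries 𝕜 :=
  PowerSeries.mk fun n => iteratedDeriv n f 0 / n !

theorem taylorSeries_congr {f g : 𝕜 → 𝕜} (h : f =ᶠ[nhds 0] g) :
    taylorSeries f = taylorSeries g := by
  ext n
  simp [taylorSeries, h.iteratedDeriv_eq n]

theorem taylorSeries_comp_const_mul {c : 𝕜} (hc : c ≠ 0) (f : 𝕜 → 𝕜) :
    taylorSeries (fun x => f (c * x)) = PowerSeries.rescale c (taylorSeries f) := by
  ext n
  simp [taylorSeries, iteratedDeriv_comp_const_mul_of_ne_zero hc, mul_div_assoc]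

theorem taylorSeries_id : taylorSeries (fun x : 𝕜 => x) = PowerSeries.X := by
  ext n
  rcases eq_or_ne n 1 with rfl | hn
  · simp [taylorSeries, iteratedDeriv_fun_id_zero]
  · simp [taylorSeries, iteratedDeriv_fun_id_zero, PowerSeries.coeff_X, hn]

variable [CharZero 𝕜]

theorem taylorSeries_mul {f g : 𝕜 → 𝕜} (hf : ContDiffAt 𝕜 ∞ f 0)
    (hg : ContDiffAt 𝕜 ∞ g 0) :
    taylorSeries (fun x => f x * g x) = taylorSeries f * taylorSeries g := by
  ext n
  rw [PowerSeries.coeff_mul, Finset.Nat.sum_antidiagonal_eq_sum_range_succ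
    (fun i j => PowerSeries.coeff i (taylorSeries f) * PowerSeries.coeff j (taylorSeries g))]
  simp only [taylorSeries, PowerSeries.coeff_mk]
  rw [iteratedDeriv_fun_mul (hf.of_le (mod_cast le_top)) (hg.of_le (mod_cast le_top)),
    Finset.sum_div]
  refine Finset.sum_congr rfl fun i hi => ?_
  have hin : i ≤ n := Nat.lt_succ_iff.mp (Finset.mem_range.mp hi)
  have hfact := Nat.choose_mul_factorial_mul_factorial hin
  have hchoose : (n.choose i : 𝕜) ≠ 0 := Nat.cast_ne_zero.mpr (Nat.choose_pos hin).ne'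
  rw [← hfact]
  push_cast
  field_simp

end Taylor

theorem taylorSeries_cexp_const_mul (d : ℂ) :
    taylorSeries (fun x => exp (d * x)) = PowerSeries.mk fun n => d ^ n / n ! := by
  ext n
  simp [taylorSeries, iteratedDeriv_cexp_const_mul]

theorem taylorSeries_one_sub_cexp_neg :
    taylorSeries (fun x => 1 - exp (-x)) =
      PowerSeries.mk fun n => if n = 0 then 0 else -((-1 : ℂ) ^ n / n !) := by
  ext n
  rcases Nat.eq_zero_or_pos n with rfl | hn
  · simp [taylorSeries]
  · have hderiv := iteratedDeriv_cexp_const_mul n (-1)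
    simp only [neg_one_mul] at hderiv
    simp [taylorSeries, iteratedDeriv_const_sub hn, hn.ne', hderiv, neg_div]

theorem Complex.analyticAt_Gamma_of_re_pos {s : ℂ} (hs : 0 < s.re) : AnalyticAt ℂ Gamma s := by
  rw [analyticAt_iff_eventually_differentiableAt]
  filter_upwards [(continuous_re.isOpen_preimage _ isOpen_Ioi).mem_nhds hs] with z hz
  refine differentiableAt_Gamma z fun m hm => ?_
  have : (0 : ℝ) < -m := by simpa [hm] using hz
  linarith [(m.cast_nonneg : (0 : ℝ) ≤ m)]

theorem Complex.contDiffAt_Gamma_one_add_mul (a : ℂ) :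
    ContDiffAt ℂ ∞ (fun z => Gamma (1 + a * z)) 0 :=
  ((analyticAt_Gamma_of_re_pos (s := 1) (by simp)).comp_of_eq (by fun_prop) (by simp)).contDiffAt

theorem Complex.Gamma_one_add_mul_Gamma_one_sub {w : ℂ} (hw : w ≠ 0) :
    Gamma (1 + w) * Gamma (1 - w) = π * w / sin (π * w) := by
  rw [add_comm, Gamma_add_one w hw, mul_assoc, Gamma_mul_Gamma_one_sub]
  ring

theorem Complex.one_sub_exp_neg_two_mul_mul_I (x : ℂ) :
    1 - exp (-(2 * x * I)) = exp (-(x * I)) * (2 * I * sin x) := by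
  have hinv : exp (-(x * I)) * exp (x * I) = 1 := by rw [← exp_add]; simp
  have hsq : exp (-(2 * x * I)) = exp (-(x * I)) * exp (-(x * I)) := by rw [← exp_add]; ring_nf
  have hsin : 2 * sin x = (exp (-(x * I)) - exp (x * I)) * I := by rw [two_sin, neg_mul]
  rw [hsq]
  linear_combination (-(I * exp (-(x * I)))) * hsin - hinv
    - exp (-(x * I)) * (exp (-(x * I)) - exp (x * I)) * I_sq

theorem Complex.sin_pi_div_two_pi_I_ne_zero {z : ℂ} (hz0 : z ≠ 0) (hz : ‖z‖ < 2 * π) :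
    sin (π * (z / (2 * π * I))) ≠ 0 := by
  rw [Ne, sin_eq_zero_iff]
  rintro ⟨k, hk⟩
  have hzk : z = 2 * π * I * k := by
    field_simp at hk
    linear_combination hk
  have hk0 : k ≠ 0 := by rintro rfl; simp_all
  have : 2 * π ≤ ‖z‖ := by
    rw [hzk]
    simp only [Complex.norm_mul, norm_ofNat, norm_real, Real.norm_eq_abs,
      abs_of_pos Real.pi_pos, norm_I, mul_one, norm_intCast]
    have : (1 : ℝ) ≤ |(k : ℝ)| := by exact_mod_cast Int.one_le_abs hk0
    nlinarith [Real.pi_pos]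
  linarith

theorem Complex.Gamma_mul_Gamma_mul_one_sub_exp_neg {z : ℂ} (hz : ‖z‖ < 2 * π) :
    Gamma (1 + z / (2 * π * I)) * Gamma (1 - z / (2 * π * I)) * (1 - exp (-z)) =
      exp (-z / 2) * z := by
  rcases eq_or_ne z 0 with rfl | hz0
  · simp
  have hw0 : z / (2 * π * I) ≠ 0 := div_ne_zero hz0 (by simp [Real.pi_ne_zero, I_ne_zero])
  have hsin := sin_pi_div_two_pi_I_ne_zero hz0 hz
  set w := z / (2 * π * I)
  have hzw : 2 * (π * w) * I = z := by simp only [w]; field_simp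
  have hexp := one_sub_exp_neg_two_mul_mul_I (π * w)
  rw [hzw, show (π : ℂ) * w * I = z / 2 by linear_combination hzw / 2] at hexp
  rw [Gamma_one_add_mul_Gamma_one_sub hw0, hexp, neg_div, ← hzw]
  field_simp

/-- In `ℂ[[x]]` one has `G(x/(2πi)) · G(-x/(2πi)) = e^{-x/2} · T(x)`, where `G` is the
Taylor expansion at `0` of `y ↦ Γ(1+y)` and `T` is the Todd series, the Taylor expansion
at `0` of `x/(1-e^{-x})`, characterized as the unique power series with
`T(x) · (1 - e^{-x}) = x` (the factor `1 - e^{-x}` being taken as a power series). -/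
theorem stmt15 (G T : PowerSeries ℂ)
    (hG : G = PowerSeries.mk fun k =>
      iteratedDeriv k (fun y : ℂ => Complex.Gamma (1 + y)) 0 / (k.factorial : ℂ))
    (hT : T * (PowerSeries.mk fun k =>
        if k = 0 then 0 else -((-1 : ℂ) ^ k / (k.factorial : ℂ)))
      = PowerSeries.X) :
    PowerSeries.rescale (1 / (2 * (Real.pi : ℂ) * Complex.I)) G *
        PowerSeries.rescale (-(1 / (2 * (Real.pi : ℂ) * Complex.I))) G
      = (PowerSeries.mk fun k => (-(1 : ℂ) / 2) ^ k / (k.factorial : ℂ)) * T := by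
  set S : PowerSeries ℂ := PowerSeries.mk fun k => if k = 0 then 0 else -((-1 : ℂ) ^ k / k !)
    with hS_def
  have hc : 1 / (2 * (π : ℂ) * I) ≠ 0 := by simp [Real.pi_ne_zero, I_ne_zero]
  have hΓ₁ := contDiffAt_Gamma_one_add_mul (1 / (2 * π * I))
  have hΓ₂ := contDiffAt_Gamma_one_add_mul (-(1 / (2 * π * I)))
  have hrescale {a : ℂ} (ha : a ≠ 0) :
      PowerSeries.rescale a G = taylorSeries fun z => Gamma (1 + a * z) := by
    rw [hG]
    exact (taylorSeries_comp_const_mul ha _).symm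
  have hfun : (fun z => Gamma (1 + 1 / (2 * π * I) * z) * Gamma (1 + -(1 / (2 * π * I)) * z) *
      (1 - exp (-z))) =ᶠ[nhds 0] fun z => exp (-1 / 2 * z) * z := by
    filter_upwards [Metric.ball_mem_nhds 0 Real.two_pi_pos] with z hz
    convert Gamma_mul_Gamma_mul_one_sub_exp_neg (mem_ball_zero_iff.1 hz) using 4 <;> ring
  have key : PowerSeries.rescale (1 / (2 * (π : ℂ) * I)) G *
      PowerSeries.rescale (-(1 / (2 * (π : ℂ) * I))) G * S =
      (PowerSeries.mk fun k => (-(1 : ℂ) / 2) ^ k / k !) * PowerSeries.X := by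
    rw [hrescale hc, hrescale (neg_ne_zero.2 hc), hS_def, ← taylorSeries_one_sub_cexp_neg,
      ← taylorSeries_cexp_const_mul, ← taylorSeries_id,
      ← taylorSeries_mul hΓ₁ hΓ₂, ← taylorSeries_mul (hΓ₁.mul hΓ₂) (by fun_prop),
      ← taylorSeries_mul (by fun_prop) (by fun_prop)]
    exact taylorSeries_congr hfun
  have hS : S ≠ 0 := fun h => by simpa [S] using congrArg (PowerSeries.coeff 1) h
  refine mul_right_cancel₀ hS ?_
  rw [key, ← hT]
  ring
end
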